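/- For every θ ∈ (0,1) there exists a constant C = C(θ) such that for every complex Banach space E, every positive integer n, and every function f : Ā → E which is continuous on Ā, analytic on Ω, and satisfies ‖f(z)‖_E ≤ 1 for all z ∈ Ā, one has ‖f(e^θ) − Σ_{|k|≤n} f̂(k) e^{θk} − Σ_{n<|k|≤2n} (2 − |k|/n) f̂(k) e^{θk}‖_E ≤ C(e^{−n(1−θ)} + e^{−nθ}). -/

import Mathlib

/-!
Cauchy's theorem moves the circle defining `f̂ k` to any radius `r ∈ [1, e]`, whence
`‖f̂ k‖ ≤ r ^ (-k)`. Taking `r = e` for `k ≥ 0` and `r = 1` for `k < 0` bounds the terms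
`e^{θk} f̂ k` of the Laurent series at `e^θ` by `e^{-(1-θ)|k|} + e^{-θ|k|}`. The series thus
converges absolutely, and its sum is `f (e^θ)` because it is the Fourier series of
`t ↦ f (e^θ e^{it})`. The de la Vallée Poussin mean keeps the terms with `|k| ≤ n` and a
fraction in `[0, 1]` of the others, so the error is at most the two geometric tails over `|k| > n`.
-/

open MeasureTheory Filter Topology

/-- The closed annulus `Ā = {z : 1 ≤ |z| ≤ e}`. -/
noncomputable def closedAnnulus : Set ℂ :=
  {z : ℂ | 1 ≤ ‖z‖ ∧ ‖z‖ ≤ Real.exp 1}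

/-- The open annulus `Ω = {z : 1 < |z| < e}`. -/
noncomputable def openAnnulus : Set ℂ :=
  {z : ℂ | 1 < ‖z‖ ∧ ‖z‖ < Real.exp 1}

/-- The `k`-th Fourier–Laurent coefficient `f̂(k) = ∫₀^{2π} f(e^{it}) e^{-ikt} dt/2π`
of a function on the annulus. -/
noncomputable def fourierLaurent {E : Type*} [NormedAddCommGroup E] [NormedSpace ℂ E]
    (f : ℂ → E) (k : ℤ) : E :=
  (((2 * Real.pi)⁻¹ : ℝ) : ℂ) •
    ∫ t in (0:ℝ)..(2 * Real.pi),
      Complex.exp (-(Complex.I * k * t)) • f (Complex.exp (Complex.I * t))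

open Complex

variable {E : Type*} [NormedAddCommGroup E] [NormedSpace ℂ E]

lemma isOpen_openAnnulus : IsOpen openAnnulus :=
  (isOpen_lt continuous_const continuous_norm).inter (isOpen_lt continuous_norm continuous_const)

lemma zero_notMem_closedAnnulus : (0 : ℂ) ∉ closedAnnulus := fun h => by
  norm_num [closedAnnulus] at h

lemma ofReal_mul_mem_closedAnnulus {r : ℝ} (hr1 : 1 ≤ r) (hre : r ≤ Real.exp 1) {w : ℂ}
    (hw : ‖w‖ = 1) : (r : ℂ) * w ∈ closedAnnulus := by
  have hr : ‖(r : ℂ) * w‖ = r := by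
    rw [norm_mul, hw, mul_one, norm_real, Real.norm_of_nonneg (by linarith)]
  exact ⟨hr.symm ▸ hr1, hr.symm ▸ hre⟩

lemma circleIntegral_zpow_smul_eq (f : ℂ → E) (k : ℤ) {r : ℝ} (hr : r ≠ 0) :
    (∮ z in C(0, r), z ^ (-k - 1) • f z) =
      (I * (r : ℂ) ^ (-k)) •
        ∫ t in (0 : ℝ)..2 * Real.pi, exp (-(I * k * t)) • f (r * exp (I * t)) := by
  rw [← intervalIntegral.integral_smul, circleIntegral]
  refine intervalIntegral.integral_congr fun t _ => ?_
  have hr' : (r : ℂ) ≠ 0 := ofReal_ne_zero.2 hr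
  simp only [deriv_circleMap, circleMap_zero, smul_smul, mul_comm (t : ℂ) I]
  congr 1
  rw [mul_zpow, ← exp_int_mul, zpow_sub_one₀ hr']
  calc _ = I * r ^ (-k) * (r * (r : ℂ)⁻¹) * exp (I * t + (-k - 1 : ℤ) * (I * t)) := by
          rw [exp_add]; ring
    _ = _ := by rw [mul_inv_cancel₀ hr']; push_cast; ring_nf

lemma zpow_smul_fourierLaurent {f : ℂ → E} (hc : ContinuousOn f closedAnnulus)
    (hd : DifferentiableOn ℂ f openAnnulus) {r : ℝ} (hr1 : 1 ≤ r) (hre : r ≤ Real.exp 1)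
    (k : ℤ) :
    (r : ℂ) ^ k • fourierLaurent f k = (((2 * Real.pi)⁻¹ : ℝ) : ℂ) •
      ∫ t in (0 : ℝ)..2 * Real.pi, exp (-(I * k * t)) • f (r * exp (I * t)) := by
  have hne : ∀ z ∈ closedAnnulus, z ≠ 0 := fun z hz h => zero_notMem_closedAnnulus (h ▸ hz)
  have hg_cont : ContinuousOn (fun z : ℂ => z ^ (-k - 1) • f z) closedAnnulus :=
    (continuousOn_id.zpow₀ _ fun z hz => .inl (hne z hz)).smul hc
  have hg_diff : DifferentiableOn ℂ (fun z : ℂ => z ^ (-k - 1) • f z) openAnnulus :=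
    (differentiableOn_id.zpow (.inl fun z hz => hne z ⟨hz.1.le, hz.2.le⟩)).smul hd
  have cauchy : (∮ z in C(0, r), z ^ (-k - 1) • f z) = ∮ z in C(0, 1), z ^ (-k - 1) • f z := by
    refine circleIntegral_eq_of_differentiable_on_annulus_off_countable one_pos hr1
      Set.countable_empty (hg_cont.mono fun z hz => ?_) fun z hz => hg_diff.differentiableAt
        (isOpen_openAnnulus.mem_nhds ?_)
    · simp only [Set.mem_sdiff, Metric.mem_closedBall, Metric.mem_ball, dist_zero_right,
        not_lt] at hz
      exact ⟨hz.2, hz.1.trans hre⟩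
    · simp only [Set.mem_sdiff, Metric.mem_closedBall, Metric.mem_ball, dist_zero_right,
        not_le] at hz
      exact ⟨hz.1.2, hz.1.1.trans_le hre⟩
  have hI : I * (r : ℂ) ^ (-k) ≠ 0 :=
    mul_ne_zero I_ne_zero (zpow_ne_zero _ (by norm_cast; positivity))
  rw [circleIntegral_zpow_smul_eq f k (by positivity),
    circleIntegral_zpow_smul_eq f k one_ne_zero, ← eq_inv_smul_iff₀ hI, smul_smul] at cauchy
  simp only [ofReal_one, one_zpow, mul_one, one_mul] at cauchy
  rw [cauchy, fourierLaurent, smul_comm]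
  congr 2
  rw [zpow_neg]
  field_simp

lemma norm_fourierLaurent_le {f : ℂ → E} (hc : ContinuousOn f closedAnnulus)
    (hd : DifferentiableOn ℂ f openAnnulus) (hb : ∀ z ∈ closedAnnulus, ‖f z‖ ≤ 1)
    {s : ℝ} (hs0 : 0 ≤ s) (hs1 : s ≤ 1) (k : ℤ) :
    ‖fourierLaurent f k‖ ≤ Real.exp (-(s * k)) := by
  have hr1 : 1 ≤ Real.exp s := Real.one_le_exp hs0
  have hre : Real.exp s ≤ Real.exp 1 := Real.exp_le_exp.2 hs1
  have hint :
      ‖∫ t in (0 : ℝ)..2 * Real.pi, exp (-(I * k * t)) • f (Real.exp s * exp (I * t))‖ ≤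
        1 * |2 * Real.pi - 0| := by
    refine intervalIntegral.norm_integral_le_of_norm_le_const fun t _ => ?_
    have hexp : ‖exp (-(I * k * t))‖ = 1 := by simp [norm_exp]
    rw [norm_smul, hexp, one_mul]
    exact hb _ (ofReal_mul_mem_closedAnnulus hr1 hre (norm_exp_I_mul_ofReal t))
  have hcoeff := congrArg norm (zpow_smul_fourierLaurent hc hd hr1 hre k)
  rw [norm_smul, norm_smul, norm_zpow, norm_real, Real.norm_of_nonneg (Real.exp_pos s).le,
    ← Real.rpow_intCast, ← Real.exp_mul, norm_real, Real.norm_of_nonneg (by positivity)]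
    at hcoeff
  rw [Real.exp_neg, ← one_div, le_div_iff₀ (Real.exp_pos _), mul_comm, hcoeff]
  calc _ ≤ (2 * Real.pi)⁻¹ * (1 * |2 * Real.pi - 0|) := by gcongr
    _ = 1 := by
      rw [sub_zero, abs_of_pos Real.two_pi_pos, one_mul, inv_mul_cancel₀ Real.two_pi_pos.ne']

lemma norm_exp_mul_smul_fourierLaurent_le {f : ℂ → E} (hc : ContinuousOn f closedAnnulus)
    (hd : DifferentiableOn ℂ f openAnnulus) (hb : ∀ z ∈ closedAnnulus, ‖f z‖ ≤ 1)
    (θ : ℝ) (k : ℤ) :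
    ‖((Real.exp (θ * k) : ℝ) : ℂ) • fourierLaurent f k‖ ≤
      Real.exp (-(1 - θ)) ^ k.natAbs + Real.exp (-θ) ^ k.natAbs := by
  have key : ∀ s, 0 ≤ s → s ≤ 1 → ‖((Real.exp (θ * k) : ℝ) : ℂ) • fourierLaurent f k‖ ≤
      Real.exp ((θ - s) * k) := fun s hs0 hs1 => by
    rw [norm_smul, norm_real, Real.norm_of_nonneg (Real.exp_pos _).le, sub_mul, sub_eq_add_neg,
      Real.exp_add]
    exact mul_le_mul_of_nonneg_left (norm_fourierLaurent_le hc hd hb hs0 hs1 k)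
      (Real.exp_pos _).le
  rw [← Real.exp_nat_mul, ← Real.exp_nat_mul, Nat.cast_natAbs, Int.cast_abs]
  rcases le_or_gt 0 k with hk | hk
  · calc _ ≤ Real.exp ((θ - 1) * k) := key 1 zero_le_one le_rfl
      _ = Real.exp (|(k : ℝ)| * -(1 - θ)) := by
        rw [abs_of_nonneg (by exact_mod_cast hk)]; ring_nf
      _ ≤ _ := le_add_of_nonneg_right (Real.exp_pos _).le
  · calc _ ≤ Real.exp ((θ - 0) * k) := key 0 le_rfl zero_le_one
      _ = Real.exp (|(k : ℝ)| * -θ) := by rw [abs_of_neg (by exact_mod_cast hk)]; ring_nf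
      _ ≤ _ := le_add_of_nonneg_left (Real.exp_pos _).le

lemma HasSum.comp_natAbs {G : Type*} [AddCommGroup G] [TopologicalSpace G]
    [IsTopologicalAddGroup G] {F : ℕ → G} {s : G} (h : HasSum F s) :
    HasSum (fun k : ℤ => F k.natAbs) (2 • s - F 0) := by
  simpa [two_nsmul] using
    HasSum.of_nat_of_neg (f := fun k : ℤ => F k.natAbs) (by simpa using h) (by simpa using h)

lemma hasSum_geometric_tail {a : ℝ} (ha0 : 0 ≤ a) (ha1 : a < 1) (n : ℕ) :
    HasSum (fun m : ℕ => if n < m then a ^ m else 0) (a ^ (n + 1) / (1 - a)) := by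
  have head : ∑ m ∈ Finset.range (n + 1), (if n < m then a ^ m else 0) = 0 :=
    Finset.sum_eq_zero fun m hm => if_neg (by rw [Finset.mem_range] at hm; omega)
  rw [← hasSum_nat_add_iff' (n + 1), head, sub_zero, div_eq_mul_inv]
  refine ((hasSum_geometric_of_lt_one ha0 ha1).mul_left (a ^ (n + 1))).congr_fun fun m => ?_
  rw [if_pos (by omega), pow_add, mul_comm]

lemma hasSum_int_geometric_tail {a : ℝ} (ha0 : 0 ≤ a) (ha1 : a < 1) (n : ℕ) :
    HasSum (fun k : ℤ => if n < k.natAbs then a ^ k.natAbs else 0)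
      (2 * a ^ (n + 1) / (1 - a)) := by
  simpa [mul_div_assoc] using (hasSum_geometric_tail ha0 ha1 n).comp_natAbs

lemma hasSum_zpow_smul_fourierLaurent_complex {f : ℂ → ℂ} (hc : ContinuousOn f closedAnnulus)
    (hd : DifferentiableOn ℂ f openAnnulus) {ρ : ℝ} (hρ1 : 1 ≤ ρ) (hρe : ρ ≤ Real.exp 1)
    (hs : Summable fun k : ℤ => (ρ : ℂ) ^ k • fourierLaurent f k) :
    HasSum (fun k : ℤ => (ρ : ℂ) ^ k • fourierLaurent f k) (f ρ) := by
  have : Fact (0 < 2 * Real.pi) := ⟨Real.two_pi_pos⟩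
  let G : C(AddCircle (2 * Real.pi), ℂ) :=
    ⟨fun x => f (ρ * AddCircle.toCircle x), hc.comp_continuous (by fun_prop) fun x =>
      ofReal_mul_mem_closedAnnulus hρ1 hρe (Circle.norm_coe _)⟩
  have coeff : ∀ k, fourierCoeff G k = (ρ : ℂ) ^ k • fourierLaurent f k := fun k => by
    rw [fourierCoeff_eq_intervalIntegral _ k 0, zero_add,
      zpow_smul_fourierLaurent hc hd hρ1 hρe, coe_smul, one_div]
    congr 1
    refine intervalIntegral.integral_congr fun t _ => ?_
    simp only [G, ContinuousMap.coe_mk, AddCircle.toCircle_apply_mk, Circle.coe_exp,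
      fourier_coe_apply]
    congr 3
    · field_simp
      push_cast
      ring
    · push_cast
      field_simp
  have hG0 : G 0 = f ρ := by simp [G]
  have h := has_pointwise_sum_fourier_series_of_summable (funext coeff ▸ hs) 0
  simp only [fourier_eval_zero, smul_eq_mul, mul_one] at h
  rwa [funext coeff, hG0] at h

lemma ContinuousLinearMap.fourierLaurent_comp {F : Type*} [NormedAddCommGroup F]
    [NormedSpace ℂ F] [CompleteSpace E] [CompleteSpace F] (φ : E →L[ℂ] F) {f : ℂ → E}
    (hc : ContinuousOn f closedAnnulus) (k : ℤ) :
    fourierLaurent (φ ∘ f) k = φ (fourierLaurent f k) := by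
  have hint : IntervalIntegrable (fun t : ℝ => exp (-(I * k * t)) • f (exp (I * t)))
      MeasureTheory.volume 0 (2 * Real.pi) :=
    ((by fun_prop : Continuous fun t : ℝ => exp (-(I * k * t))).smul
      (hc.comp_continuous (by fun_prop) fun t => ⟨(norm_exp_I_mul_ofReal t).ge,
        (norm_exp_I_mul_ofReal t).trans_le (Real.one_le_exp zero_le_one)⟩)).intervalIntegrable
      _ _
  simp only [fourierLaurent, map_smul, ← φ.intervalIntegral_comp_comm hint, Function.comp_apply]

lemma hasSum_zpow_smul_fourierLaurent [CompleteSpace E] {f : ℂ → E}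
    (hc : ContinuousOn f closedAnnulus) (hd : DifferentiableOn ℂ f openAnnulus) {ρ : ℝ}
    (hρ1 : 1 ≤ ρ) (hρe : ρ ≤ Real.exp 1)
    (hs : Summable fun k : ℤ => (ρ : ℂ) ^ k • fourierLaurent f k) :
    HasSum (fun k : ℤ => (ρ : ℂ) ^ k • fourierLaurent f k) (f ρ) := by
  convert hs.hasSum
  -- Hahn–Banach reduces the identity to the scalar case, one functional at a time.
  refine (SeparatingDual.eq_iff_forall_dual_eq (R := ℂ)).2 fun φ => ?_
  have hφ := hasSum_zpow_smul_fourierLaurent_complex (φ.continuous.comp_continuousOn hc)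
    (φ.differentiable.comp_differentiableOn hd) hρ1 hρe
    (by simpa only [φ.fourierLaurent_comp hc, map_smul] using φ.summable hs)
  simp only [φ.fourierLaurent_comp hc, ← map_smul] at hφ
  exact hφ.unique (φ.hasSum hs.hasSum)

noncomputable def vallePoussinWeight (n : ℕ) (k : ℤ) : ℝ :=
  if k.natAbs ≤ n then 1 else if k.natAbs ≤ 2 * n then 2 - |(k : ℝ)| / n else 0

lemma vallePoussinWeight_eq_zero {n : ℕ} {k : ℤ} (hk : 2 * n < k.natAbs) :
    vallePoussinWeight n k = 0 := by
  rw [vallePoussinWeight, if_neg (by omega), if_neg (by omega)]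

lemma abs_one_sub_vallePoussinWeight_le (n : ℕ) (k : ℤ) :
    |1 - vallePoussinWeight n k| ≤ if n < k.natAbs then 1 else 0 := by
  have hk : |(k : ℝ)| = k.natAbs := by rw [Nat.cast_natAbs, Int.cast_abs]
  unfold vallePoussinWeight
  split_ifs <;> try omega
  · simp
  · have hn : (0 : ℝ) < n := by exact_mod_cast (show 0 < n by omega)
    have h1' : (n : ℝ) < k.natAbs := by exact_mod_cast ‹n < k.natAbs›
    have h2' : (k.natAbs : ℝ) ≤ 2 * n := by exact_mod_cast ‹k.natAbs ≤ 2 * n›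
    rw [hk, abs_le]
    constructor
    · linarith [(le_div_iff₀ hn).2 (by linarith : 1 * (n : ℝ) ≤ k.natAbs)]
    · linarith [(div_le_iff₀ hn).2 h2']
  · simp

lemma sum_vallePoussinWeight_smul (u : ℤ → E) (n : ℕ) :
    ∑ k ∈ Finset.Icc (-(2 * (n : ℤ))) (2 * (n : ℤ)), (vallePoussinWeight n k : ℂ) • u k =
      ∑ k ∈ Finset.Icc (-(n : ℤ)) n, u k +
        ∑ k ∈ Finset.Icc (-(2 * (n : ℤ))) (2 * (n : ℤ)) \ Finset.Icc (-(n : ℤ)) n,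
          ((2 - |(k : ℝ)| / n : ℝ) : ℂ) • u k := by
  have hsub : Finset.Icc (-(n : ℤ)) n ⊆ Finset.Icc (-(2 * (n : ℤ))) (2 * (n : ℤ)) :=
    fun k hk => by rw [Finset.mem_Icc] at hk ⊢; omega
  rw [← Finset.sum_sdiff hsub, add_comm]
  congr 1 <;> refine Finset.sum_congr rfl fun k hk => ?_
  · rw [Finset.mem_Icc] at hk
    rw [vallePoussinWeight, if_pos (by omega), ofReal_one, one_smul]
  · rw [Finset.mem_sdiff, Finset.mem_Icc, Finset.mem_Icc] at hk
    rw [vallePoussinWeight, if_neg (by omega), if_pos (by omega)]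

lemma norm_sub_sum_sub_sum_vallePoussin_le {u : ℤ → E} {s : E} (hu : HasSum u s) {g : ℤ → ℝ}
    (hug : ∀ k, ‖u k‖ ≤ g k) {n : ℕ} {G : ℝ}
    (hG : HasSum (fun k : ℤ => if n < k.natAbs then g k else 0) G) :
    ‖s - ∑ k ∈ Finset.Icc (-(n : ℤ)) n, u k -
        ∑ k ∈ Finset.Icc (-(2 * (n : ℤ))) (2 * (n : ℤ)) \ Finset.Icc (-(n : ℤ)) n,
          ((2 - |(k : ℝ)| / n : ℝ) : ℂ) • u k‖ ≤ G := by
  rw [sub_sub, ← sum_vallePoussinWeight_smul]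
  have hw : HasSum (fun k => (vallePoussinWeight n k : ℂ) • u k)
      (∑ k ∈ Finset.Icc (-(2 * (n : ℤ))) (2 * (n : ℤ)), (vallePoussinWeight n k : ℂ) • u k) :=
    hasSum_sum_of_ne_finset_zero fun k hk => by
      rw [Finset.mem_Icc] at hk
      rw [vallePoussinWeight_eq_zero (by omega), ofReal_zero, zero_smul]
  refine (hu.sub hw).norm_le_of_bounded hG fun k => ?_
  have hsmul : u k - (vallePoussinWeight n k : ℂ) • u k =
      ((1 - vallePoussinWeight n k : ℝ) : ℂ) • u k := by
    rw [ofReal_sub, ofReal_one, sub_smul, one_smul]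
  calc ‖u k - (vallePoussinWeight n k : ℂ) • u k‖
      = |1 - vallePoussinWeight n k| * ‖u k‖ := by
        rw [hsmul, norm_smul, norm_real, Real.norm_eq_abs]
    _ ≤ (if n < k.natAbs then 1 else 0) * g k :=
        mul_le_mul (abs_one_sub_vallePoussinWeight_le n k) (hug k) (norm_nonneg _)
          (by split_ifs <;> norm_num)
    _ = if n < k.natAbs then g k else 0 := by split_ifs <;> simp

lemma ofReal_exp_zpow (x : ℝ) (k : ℤ) :
    ((Real.exp x : ℝ) : ℂ) ^ k = ((Real.exp (x * k) : ℝ) : ℂ) := by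
  rw [Real.exp_mul, Real.rpow_intCast, ofReal_zpow]

lemma hasSum_exp_mul_smul_fourierLaurent [CompleteSpace E] {f : ℂ → E}
    (hc : ContinuousOn f closedAnnulus) (hd : DifferentiableOn ℂ f openAnnulus)
    (hb : ∀ z ∈ closedAnnulus, ‖f z‖ ≤ 1) {θ : ℝ} (hθ0 : 0 < θ) (hθ1 : θ < 1) :
    HasSum (fun k : ℤ => ((Real.exp (θ * k) : ℝ) : ℂ) • fourierLaurent f k)
      (f (Real.exp θ)) := by
  have hgeom : ∀ x : ℝ, 0 < x → Summable fun k : ℤ => Real.exp (-x) ^ k.natAbs := fun x hx =>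
    (hasSum_geometric_of_lt_one (Real.exp_pos _).le
      (Real.exp_lt_one_iff.2 (neg_lt_zero.2 hx))).comp_natAbs.summable
  have hsum := Summable.of_norm_bounded ((hgeom _ (sub_pos.2 hθ1)).add (hgeom θ hθ0))
    (norm_exp_mul_smul_fourierLaurent_le hc hd hb θ)
  simpa only [ofReal_exp_zpow] using hasSum_zpow_smul_fourierLaurent hc hd
    (Real.one_le_exp hθ0.le) (Real.exp_le_exp.2 hθ1.le)
    (by simpa only [ofReal_exp_zpow] using hsum)

lemma geometric_tails_le {a b : ℝ} (ha0 : 0 ≤ a) (ha1 : a < 1) (hb0 : 0 ≤ b) (hb1 : b < 1)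
    (n : ℕ) :
    2 * a ^ (n + 1) / (1 - a) + 2 * b ^ (n + 1) / (1 - b) ≤
      (2 * a / (1 - a) + 2 * b / (1 - b)) * (a ^ n + b ^ n) := by
  have hA : 0 ≤ 2 * a / (1 - a) := div_nonneg (by positivity) (by linarith)
  have hB : 0 ≤ 2 * b / (1 - b) := div_nonneg (by positivity) (by linarith)
  calc 2 * a ^ (n + 1) / (1 - a) + 2 * b ^ (n + 1) / (1 - b)
      = 2 * a / (1 - a) * a ^ n + 2 * b / (1 - b) * b ^ n := by ring
    _ ≤ _ := by nlinarith [mul_nonneg hA (pow_nonneg hb0 n), mul_nonneg hB (pow_nonneg ha0 n)]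

universe u

theorem stmt11 (θ : ℝ) (hθ0 : 0 < θ) (hθ1 : θ < 1) :
    ∃ C : ℝ, ∀ (E : Type u) [NormedAddCommGroup E] [NormedSpace ℂ E] [CompleteSpace E],
      ∀ n : ℕ, 0 < n →
        ∀ f : ℂ → E,
          ContinuousOn f closedAnnulus → DifferentiableOn ℂ f openAnnulus →
          (∀ z ∈ closedAnnulus, ‖f z‖ ≤ 1) →
          ‖f ((Real.exp θ : ℝ) : ℂ) -
              (∑ k ∈ Finset.Icc (-(n:ℤ)) (n:ℤ),
                ((Real.exp (θ * k) : ℝ) : ℂ) • fourierLaurent f k) -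
              ∑ k ∈ Finset.Icc (-(2 * (n:ℤ))) (2 * (n:ℤ)) \ Finset.Icc (-(n:ℤ)) (n:ℤ),
                (((2 - |(k:ℝ)| / (n:ℝ) : ℝ) : ℂ) * ((Real.exp (θ * k) : ℝ) : ℂ)) •
                  fourierLaurent f k‖ ≤
            C * (Real.exp (-(n:ℝ) * (1 - θ)) + Real.exp (-(n:ℝ) * θ)) := by
  set a := Real.exp (-(1 - θ))
  set b := Real.exp (-θ)
  have ha : a < 1 := Real.exp_lt_one_iff.2 (by linarith)
  have hb : b < 1 := Real.exp_lt_one_iff.2 (by linarith)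
  refine ⟨2 * a / (1 - a) + 2 * b / (1 - b), fun E _ _ _ n _ f hc hd hbd => ?_⟩
  have htail := (hasSum_int_geometric_tail (Real.exp_pos _).le ha n).add
    (hasSum_int_geometric_tail (Real.exp_pos _).le hb n)
  simp only [ite_add_ite, add_zero] at htail
  have han : Real.exp (-(n : ℝ) * (1 - θ)) = a ^ n := by rw [← Real.exp_nat_mul]; ring_nf
  have hbn : Real.exp (-(n : ℝ) * θ) = b ^ n := by rw [← Real.exp_nat_mul]; ring_nf
  have hu := hasSum_exp_mul_smul_fourierLaurent hc hd hbd hθ0 hθ1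
  have hbound := norm_exp_mul_smul_fourierLaurent_le hc hd hbd θ
  simp only [mul_smul, han, hbn]
  exact (norm_sub_sum_sub_sum_vallePoussin_le hu hbound htail).trans
    (geometric_tails_le (Real.exp_pos _).le ha (Real.exp_pos _).le hb n)
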